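/- arXiv:2106.13579 — 4 statements merged into one kernel-verified Lean document; each statement's English description precedes it below -/
import Mathlib

section
/- Let n ≥ 1, let S be a nonempty, closed, convex subset of the set M_n of edge probability distributions on n nodes that contains at least one distribution with all entries strictly positive, and let E = (e₁,…,e_m) be a finite sequence of elements of Fin n × Fin n. Define f_E : M_n → ℝ ∪ {+∞} by f_E(Q) = ∑_{u,v} (Q[u,v] − K_{u,v})·log₂ Q[u,v], where K_{u,v} is the number of indices i with e_i = (u,v), with the conventions 0·log₂ 0 = 0 and f_E(Q) = +∞ if Q[u,v] = 0 for some (u,v) with K_{u,v} > 0. Then f_E has a unique minimizer over S: there is exactly one Q* ∈ S such that f_E(Q*) < f_E(Q) for all Q ∈ S with Q ≠ Q*. -/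
/-- `Q` is an edge probability distribution on `n` nodes. -/
def IsEdgeDist {n : ℕ} (Q : Fin n × Fin n → ℝ) : Prop :=
  (∀ a, 0 ≤ Q a ∧ Q a ≤ 1) ∧ ∑ a : Fin n × Fin n, Q a = 1

/-- Number of indices `i` with `E i = a`. -/
def edgeCount {n m : ℕ} (E : Fin m → Fin n × Fin n) (a : Fin n × Fin n) : ℕ :=
  (Finset.univ.filter (fun i => E i = a)).card

/-- The description-length objective `f_E(Q) = ∑_{u,v} (Q[u,v] − K_{u,v})·log₂ Q[u,v]`,
with the conventions `0·log₂ 0 = 0` and value `+∞` if `Q[u,v] = 0` while `K_{u,v} > 0`. -/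
noncomputable def fE {n m : ℕ} (E : Fin m → Fin n × Fin n) (Q : Fin n × Fin n → ℝ) : EReal :=
  if ∃ a, Q a = 0 ∧ 0 < edgeCount E a then ⊤
  else ((∑ a : Fin n × Fin n,
      (Q a - (edgeCount E a : ℝ)) * Real.logb 2 (Q a) : ℝ) : EReal)

/-- The same objective with natural logarithm, as a real number. -/
noncomputable def sE {n m : ℕ} (E : Fin m → Fin n × Fin n) (Q : Fin n × Fin n → ℝ) : ℝ :=
  ∑ a : Fin n × Fin n, (Q a - (edgeCount E a : ℝ)) * Real.log (Q a)

lemma fE_eq_sE {n m : ℕ} (E : Fin m → Fin n × Fin n) (Q : Fin n × Fin n → ℝ)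
    (h : ∀ a, 0 < edgeCount E a → Q a ≠ 0) :
    fE E Q = ((sE E Q / Real.log 2 : ℝ) : EReal) := by
  rw [fE, if_neg]
  · congr 1
    rw [sE, Finset.sum_div]
    refine Finset.sum_congr rfl fun a _ => ?_
    rw [Real.logb]; ring
  · rintro ⟨a, ha0, haK⟩
    exact h a haK ha0

lemma fE_eq_top {n m : ℕ} (E : Fin m → Fin n × Fin n) (Q : Fin n × Fin n → ℝ)
    (h : ∃ a, Q a = 0 ∧ 0 < edgeCount E a) : fE E Q = ⊤ := if_pos h

/-- per-coordinate midpoint convexity (non-strict). -/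
lemma coord_le (K x y : ℝ) (hK : 0 ≤ K) (hx : 0 ≤ x) (hy : 0 ≤ y)
    (hxK : 0 < K → 0 < x) (hyK : 0 < K → 0 < y) :
    ((x + y) / 2 - K) * Real.log ((x + y) / 2) ≤
      ((x - K) * Real.log x + (y - K) * Real.log y) / 2 := by
  have umid : ((x + y) / 2) * Real.log ((x + y) / 2) ≤
      (x * Real.log x + y * Real.log y) / 2 := by
    rcases eq_or_ne x y with h | h
    · subst h
      rw [show (x + x) / 2 = x by ring]; linarith
    · have := Real.strictConvexOn_mul_log.2 (Set.mem_Ici.2 hx) (Set.mem_Ici.2 hy) h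
        (by norm_num : (0:ℝ) < 1/2) (by norm_num : (0:ℝ) < 1/2) (by norm_num)
      simp only [smul_eq_mul] at this
      have e : (1/2 : ℝ) * x + (1/2 : ℝ) * y = (x + y)/2 := by ring
      rw [e] at this
      linarith
  have vmid : K * ((Real.log x + Real.log y) / 2) ≤ K * Real.log ((x + y) / 2) := by
    rcases eq_or_lt_of_le hK with h | h
    · simp [← h]
    · have hx' := hxK h
      have hy' := hyK h
      have := (strictConcaveOn_log_Ioi.concaveOn).2 (Set.mem_Ioi.2 hx') (Set.mem_Ioi.2 hy')
        (by norm_num : (0:ℝ) ≤ 1/2) (by norm_num : (0:ℝ) ≤ 1/2) (by norm_num)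
      simp only [smul_eq_mul] at this
      have e : (1/2 : ℝ) * x + (1/2 : ℝ) * y = (x + y)/2 := by ring
      rw [e] at this
      nlinarith
  nlinarith

/-- per-coordinate midpoint convexity (strict). -/
lemma coord_lt (K x y : ℝ) (hK : 0 ≤ K) (hx : 0 ≤ x) (hy : 0 ≤ y)
    (hxK : 0 < K → 0 < x) (hyK : 0 < K → 0 < y) (hxy : x ≠ y) :
    ((x + y) / 2 - K) * Real.log ((x + y) / 2) <
      ((x - K) * Real.log x + (y - K) * Real.log y) / 2 := by
  have umid : ((x + y) / 2) * Real.log ((x + y) / 2) <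
      (x * Real.log x + y * Real.log y) / 2 := by
    have := Real.strictConvexOn_mul_log.2 (Set.mem_Ici.2 hx) (Set.mem_Ici.2 hy) hxy
      (by norm_num : (0:ℝ) < 1/2) (by norm_num : (0:ℝ) < 1/2) (by norm_num)
    simp only [smul_eq_mul] at this
    have e : (1/2 : ℝ) * x + (1/2 : ℝ) * y = (x + y)/2 := by ring
    rw [e] at this
    linarith
  have vmid : K * ((Real.log x + Real.log y) / 2) ≤ K * Real.log ((x + y) / 2) := by
    rcases eq_or_lt_of_le hK with h | h
    · simp [← h]
    · have hx' := hxK h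
      have hy' := hyK h
      have := (strictConcaveOn_log_Ioi.concaveOn).2 (Set.mem_Ioi.2 hx') (Set.mem_Ioi.2 hy')
        (by norm_num : (0:ℝ) ≤ 1/2) (by norm_num : (0:ℝ) ≤ 1/2) (by norm_num)
      simp only [smul_eq_mul] at this
      have e : (1/2 : ℝ) * x + (1/2 : ℝ) * y = (x + y)/2 := by ring
      rw [e] at this
      nlinarith
  nlinarith

/-- strict midpoint convexity of `sE`. -/
lemma sE_mid_lt {n m : ℕ} (E : Fin m → Fin n × Fin n) (Q1 Q2 : Fin n × Fin n → ℝ)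
    (h1 : ∀ a, 0 ≤ Q1 a) (h2 : ∀ a, 0 ≤ Q2 a)
    (h1p : ∀ a, 0 < edgeCount E a → 0 < Q1 a)
    (h2p : ∀ a, 0 < edgeCount E a → 0 < Q2 a)
    (hne : Q1 ≠ Q2) :
    sE E (fun a => (Q1 a + Q2 a) / 2) < (sE E Q1 + sE E Q2) / 2 := by
  have hK : ∀ a : Fin n × Fin n, (0:ℝ) ≤ (edgeCount E a : ℝ) := fun a => Nat.cast_nonneg _
  have hKpos : ∀ a : Fin n × Fin n, 0 < (edgeCount E a : ℝ) → 0 < edgeCount E a := by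
    intro a h; exact_mod_cast h
  obtain ⟨a0, ha0⟩ : ∃ a, Q1 a ≠ Q2 a := by
    by_contra h
    push_neg at h
    exact hne (funext h)
  rw [sE, sE, sE, ← Finset.sum_add_distrib, Finset.sum_div]
  refine Finset.sum_lt_sum (fun a _ => ?_) ⟨a0, Finset.mem_univ a0, ?_⟩
  · exact coord_le _ _ _ (hK a) (h1 a) (h2 a)
      (fun h => h1p a (hKpos a h)) (fun h => h2p a (hKpos a h))
  · exact coord_lt _ _ _ (hK a0) (h1 a0) (h2 a0)
      (fun h => h1p a0 (hKpos a0 h)) (fun h => h2p a0 (hKpos a0 h)) ha0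

/-- lower bound for `sE` when some required coordinate is small. -/
lemma sE_lower {n m : ℕ} (E : Fin m → Fin n × Fin n) (Q : Fin n × Fin n → ℝ)
    (hQ : ∀ a, 0 ≤ Q a ∧ Q a ≤ 1) (a0 : Fin n × Fin n) (hK : 0 < edgeCount E a0)
    (hpos : 0 < Q a0) :
    -(Fintype.card (Fin n × Fin n) : ℝ) - Real.log (Q a0) ≤ sE E Q := by
  have hlog : ∀ a : Fin n × Fin n, Real.log (Q a) ≤ 0 :=
    fun a => Real.log_nonpos (hQ a).1 (hQ a).2
  have part1 : ∀ a : Fin n × Fin n, (-1 : ℝ) ≤ Q a * Real.log (Q a) := by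
    intro a
    rcases eq_or_lt_of_le (hQ a).1 with h | h
    · simp [← h]
    · have hl : 1 - (Q a)⁻¹ ≤ Real.log (Q a) := by
        have := Real.log_le_sub_one_of_pos (x := (Q a)⁻¹) (by positivity)
        rw [Real.log_inv] at this
        linarith
      have : Q a * (1 - (Q a)⁻¹) ≤ Q a * Real.log (Q a) :=
        mul_le_mul_of_nonneg_left hl (le_of_lt h)
      have e : Q a * (1 - (Q a)⁻¹) = Q a - 1 := by
        field_simp
      nlinarith
  have s1 : -(Fintype.card (Fin n × Fin n) : ℝ) ≤ ∑ a : Fin n × Fin n, Q a * Real.log (Q a) := by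
    calc -(Fintype.card (Fin n × Fin n) : ℝ)
        = ∑ _a : Fin n × Fin n, (-1 : ℝ) := by
          simp [Finset.card_univ]
      _ ≤ _ := Finset.sum_le_sum fun a _ => part1 a
  have s2 : ∑ a : Fin n × Fin n, (edgeCount E a : ℝ) * Real.log (Q a) ≤ Real.log (Q a0) := by
    have single : ∑ a : Fin n × Fin n, (edgeCount E a : ℝ) * Real.log (Q a)
        ≤ (edgeCount E a0 : ℝ) * Real.log (Q a0) := by
      have h1 : -((edgeCount E a0 : ℝ) * Real.log (Q a0))
          ≤ ∑ a : Fin n × Fin n, -((edgeCount E a : ℝ) * Real.log (Q a)) :=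
        Finset.single_le_sum
          (f := fun a => -((edgeCount E a : ℝ) * Real.log (Q a)))
          (fun a _ => neg_nonneg.2 (mul_nonpos_of_nonneg_of_nonpos (Nat.cast_nonneg _) (hlog a)))
          (Finset.mem_univ a0)
      have e : ∑ a : Fin n × Fin n, -((edgeCount E a : ℝ) * Real.log (Q a))
          = -∑ a : Fin n × Fin n, (edgeCount E a : ℝ) * Real.log (Q a) := by
        rw [Finset.sum_neg_distrib]
      rw [e] at h1
      linarith
    have hK1 : (1:ℝ) ≤ (edgeCount E a0 : ℝ) := by exact_mod_cast hK
    have : (edgeCount E a0 : ℝ) * Real.log (Q a0) ≤ 1 * Real.log (Q a0) :=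
      mul_le_mul_of_nonpos_right hK1 (hlog a0)
    linarith
  have expand : sE E Q = (∑ a : Fin n × Fin n, Q a * Real.log (Q a))
      - ∑ a : Fin n × Fin n, (edgeCount E a : ℝ) * Real.log (Q a) := by
    rw [sE, ← Finset.sum_sub_distrib]
    exact Finset.sum_congr rfl fun a _ => by ring
  rw [expand]
  linarith

theorem stmt1 {n : ℕ} (hn : 1 ≤ n) (S : Set (Fin n × Fin n → ℝ))
    (hS : S ⊆ {Q | IsEdgeDist Q}) (hSne : S.Nonempty) (hScl : IsClosed S)
    (hScv : Convex ℝ S) (hSpos : ∃ Q ∈ S, ∀ a, 0 < Q a)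
    (m : ℕ) (E : Fin m → Fin n × Fin n) :
    ∃! Qs : Fin n × Fin n → ℝ, Qs ∈ S ∧ ∀ Q ∈ S, Q ≠ Qs → fE E Qs < fE E Q := by
  classical
  obtain ⟨Q0, hQ0S, hQ0pos⟩ := hSpos
  set c : ℝ := sE E Q0 with hc
  set N : ℝ := (Fintype.card (Fin n × Fin n) : ℝ) with hN
  -- a positive lower bound for the entries of Q0
  have hne0 : Nonempty (Fin n × Fin n) := ⟨(⟨0, hn⟩, ⟨0, hn⟩)⟩
  obtain ⟨a1, -, ha1⟩ := Finset.exists_min_image Finset.univ Q0 ⟨Classical.arbitrary _,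
    Finset.mem_univ _⟩
  set δ : ℝ := min (Q0 a1) (Real.exp (-(N + c + 1))) with hδ
  have hδpos : 0 < δ := lt_min (hQ0pos a1) (Real.exp_pos _)
  -- the truncated set T
  set T : Set (Fin n × Fin n → ℝ) :=
    S ∩ {Q | ∀ a, 0 < edgeCount E a → δ ≤ Q a} with hT
  have hTcl2 : IsClosed {Q : Fin n × Fin n → ℝ | ∀ a, 0 < edgeCount E a → δ ≤ Q a} := by
    have : {Q : Fin n × Fin n → ℝ | ∀ a, 0 < edgeCount E a → δ ≤ Q a}
        = ⋂ a ∈ {a : Fin n × Fin n | 0 < edgeCount E a}, (fun Q => Q a) ⁻¹' Set.Ici δ := by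
      ext Q; simp [Set.mem_iInter]
    rw [this]
    exact isClosed_biInter fun a _ => isClosed_Ici.preimage (continuous_apply a)
  -- S is compact
  have hSsub : S ⊆ Set.Icc (0 : Fin n × Fin n → ℝ) 1 := by
    intro Q hQ
    obtain ⟨hb, -⟩ := hS hQ
    exact ⟨fun a => (hb a).1, fun a => (hb a).2⟩
  have hScomp : IsCompact S := IsCompact.of_isClosed_subset isCompact_Icc hScl hSsub
  have hTcomp : IsCompact T := hScomp.inter_right hTcl2
  have hQ0T : Q0 ∈ T := by
    refine ⟨hQ0S, fun a _ => ?_⟩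
    exact le_trans (min_le_left _ _) (ha1 a (Finset.mem_univ a))
  -- continuity of sE on T
  have hcont : ContinuousOn (sE E) T := by
    unfold sE
    refine continuousOn_finset_sum _ fun a _ => ?_
    have e : (fun Q : Fin n × Fin n → ℝ => (Q a - (edgeCount E a : ℝ)) * Real.log (Q a))
        = fun Q => Q a * Real.log (Q a) - (edgeCount E a : ℝ) * Real.log (Q a) := by
      funext Q; ring
    rw [e]
    refine ContinuousOn.sub ?_ ?_
    · exact (Real.continuous_mul_log.comp (continuous_apply a)).continuousOn
    · rcases Nat.eq_zero_or_pos (edgeCount E a) with h | h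
      · simp only [h, Nat.cast_zero, zero_mul]
        exact continuousOn_const
      · refine ContinuousOn.mul continuousOn_const ?_
        refine Real.continuousOn_log.comp (continuous_apply a).continuousOn ?_
        intro Q hQ
        exact ne_of_gt (lt_of_lt_of_le hδpos (hQ.2 a h))
  obtain ⟨Qs, hQsT, hQsmin⟩ := hTcomp.exists_isMinOn ⟨Q0, hQ0T⟩ hcont
  have hQsmin' : ∀ Q ∈ T, sE E Qs ≤ sE E Q := fun Q hQ => hQsmin hQ
  have hQsS : Qs ∈ S := hQsT.1
  have hQsposK : ∀ a, 0 < edgeCount E a → 0 < Qs a :=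
    fun a h => lt_of_lt_of_le hδpos (hQsT.2 a h)
  have hQsc : sE E Qs ≤ c := hQsmin' Q0 hQ0T
  -- global minimality of Qs among points with finite fE
  have hglobal : ∀ Q ∈ S, (∀ a, 0 < edgeCount E a → 0 < Q a) → sE E Qs ≤ sE E Q := by
    intro Q hQS hQpos
    by_cases hQT : Q ∈ T
    · exact hQsmin' Q hQT
    · have : ∃ a, 0 < edgeCount E a ∧ Q a < δ := by
        by_contra h
        push_neg at h
        exact hQT ⟨hQS, fun a ha => h a ha⟩
      obtain ⟨a0, hK0, hsmall⟩ := this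
      have hb := sE_lower E Q (hS hQS).1 a0 hK0 (hQpos a0 hK0)
      have hlog : Real.log (Q a0) < -(N + c + 1) := by
        calc Real.log (Q a0) < Real.log δ := Real.log_lt_log (hQpos a0 hK0) hsmall
          _ ≤ Real.log (Real.exp (-(N + c + 1))) := by
              apply Real.log_le_log hδpos (min_le_right _ _)
          _ = -(N + c + 1) := Real.log_exp _
      have : c + 1 ≤ sE E Q := by
        rw [← hN] at hb
        linarith
      linarith
  -- positivity of log 2
  have hlog2 : (0:ℝ) < Real.log 2 := Real.log_pos one_lt_two
  have hQsfin : fE E Qs = ((sE E Qs / Real.log 2 : ℝ) : EReal) :=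
    fE_eq_sE E Qs fun a h => ne_of_gt (hQsposK a h)
  -- the strict minimality property
  have hstrict : ∀ Q ∈ S, Q ≠ Qs → fE E Qs < fE E Q := by
    intro Q hQS hQne
    by_cases htop : ∃ a, Q a = 0 ∧ 0 < edgeCount E a
    · rw [fE_eq_top E Q htop, hQsfin]
      exact EReal.coe_lt_top _
    · push_neg at htop
      have hQposK : ∀ a, 0 < edgeCount E a → 0 < Q a := by
        intro a h
        rcases eq_or_lt_of_le ((hS hQS).1 a).1 with h0 | h0
        · exact absurd h (not_lt.2 (htop a h0.symm))
        · exact h0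
      have hQfin : fE E Q = ((sE E Q / Real.log 2 : ℝ) : EReal) :=
        fE_eq_sE E Q fun a h => ne_of_gt (hQposK a h)
      -- midpoint
      set M : Fin n × Fin n → ℝ := fun a => (Q a + Qs a) / 2 with hM
      have hMS : M ∈ S := by
        have := hScv hQS hQsS (by norm_num : (0:ℝ) ≤ 1/2) (by norm_num : (0:ℝ) ≤ 1/2)
          (by norm_num)
        convert this using 1
        funext a
        simp [hM, Pi.add_apply, Pi.smul_apply, smul_eq_mul]
        ring
      have hMposK : ∀ a, 0 < edgeCount E a → 0 < M a := by
        intro a h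
        have := hQposK a h
        have := hQsposK a h
        simp only [hM]
        linarith
      have hmid : sE E M < (sE E Q + sE E Qs) / 2 :=
        sE_mid_lt E Q Qs (fun a => ((hS hQS).1 a).1) (fun a => ((hS hQsS).1 a).1)
          hQposK hQsposK hQne
      have hle : sE E Qs ≤ sE E M := hglobal M hMS hMposK
      have hlt : sE E Qs < sE E Q := by linarith
      rw [hQsfin, hQfin]
      exact_mod_cast div_lt_div_of_pos_right hlt hlog2
  refine ⟨Qs, ⟨hQsS, hstrict⟩, ?_⟩
  rintro Q' ⟨hQ'S, hQ'strict⟩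
  by_contra hne'
  exact absurd (hQ'strict Qs hQsS (Ne.symm hne')) (not_lt.2 (le_of_lt (hstrict Q' hQ'S hne')))
end

section
/- Let ι be a finite type, K : ι → ℝ with K i ≥ 0 for all i, and i₀ ∈ ι with K i₀ > 0. Let (p_j)_{j∈ℕ} be a sequence of functions ι → ℝ with 0 < p_j i ≤ 1 for all i, j, converging (pointwise) to q : ι → ℝ with q i₀ = 0. Then g(p_j) = ∑_{i∈ι} (p_j i − K i)·log₂(p_j i) tends to +∞ as j → ∞. -/
open Filter

lemma term_lb (x Kv : ℝ) (hx : 0 < x) (hx1 : x ≤ 1) (hK : 0 ≤ Kv) :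
    -(1 / Real.log 2) ≤ (x - Kv) * Real.logb 2 x := by
  have hlog2 : (0:ℝ) < Real.log 2 := Real.log_pos (by norm_num)
  have hlx : Real.log x ≤ 0 := Real.log_nonpos hx.le hx1
  -- x * log x ≥ x - 1
  have h1 : Real.log (1/x) ≤ 1/x - 1 := Real.log_le_sub_one_of_pos (by positivity)
  have h2 : x - 1 ≤ x * Real.log x := by
    rw [Real.log_div one_ne_zero hx.ne', Real.log_one] at h1
    have := mul_le_mul_of_nonneg_left h1 hx.le
    have hxne := hx.ne'
    field_simp at this
    nlinarith
  have h3 : -1 ≤ (x - Kv) * Real.log x := by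
    have hKlog : 0 ≤ -(Kv * Real.log x) := by nlinarith
    nlinarith
  have he : -(1/Real.log 2) = (-1)/Real.log 2 := by ring
  rw [he, Real.logb, mul_div_assoc']
  gcongr

theorem stmt3 {ι : Type*} [Fintype ι] (K : ι → ℝ) (hK : ∀ i, 0 ≤ K i)
    (i₀ : ι) (hi₀ : 0 < K i₀)
    (p : ℕ → ι → ℝ) (hp : ∀ j i, 0 < p j i ∧ p j i ≤ 1)
    (q : ι → ℝ) (hconv : ∀ i, Tendsto (fun j => p j i) atTop (nhds (q i)))
    (hq : q i₀ = 0) :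
    Tendsto (fun j => ∑ i, (p j i - K i) * Real.logb 2 (p j i)) atTop atTop := by
  have hlog2 : (0:ℝ) < Real.log 2 := Real.log_pos (by norm_num)
  -- the i₀ term tends to atTop
  have hp0 : Tendsto (fun j => p j i₀) atTop (nhds 0) := hq ▸ hconv i₀
  have hlogb : Tendsto (fun j => Real.logb 2 (p j i₀)) atTop atBot := by
    have h1 : Tendsto (fun j => p j i₀) atTop (nhdsWithin 0 (Set.Ioi 0)) := by
      refine tendsto_nhdsWithin_iff.2 ⟨hp0, Eventually.of_forall fun j => (hp j i₀).1⟩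
    have h2 : Tendsto (fun j => Real.log (p j i₀)) atTop atBot :=
      Real.tendsto_log_nhdsGT_zero.comp h1
    have := h2.atBot_div_const hlog2
    simpa [Real.logb] using this
  have hterm : Tendsto (fun j => (p j i₀ - K i₀) * Real.logb 2 (p j i₀)) atTop atTop := by
    have hc : Tendsto (fun j => p j i₀ - K i₀) atTop (nhds (0 - K i₀)) :=
      hp0.sub tendsto_const_nhds
    rw [zero_sub] at hc
    exact Tendsto.neg_mul_atBot (neg_neg_iff_pos.2 hi₀) hc hlogb
  set c : ℝ := -(1 / Real.log 2) * (Fintype.card ι)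
  have hge : ∀ j, (fun j => (p j i₀ - K i₀) * Real.logb 2 (p j i₀) + c) j ≤
      ∑ i, (p j i - K i) * Real.logb 2 (p j i) := by
    intro j
    classical
    show (p j i₀ - K i₀) * Real.logb 2 (p j i₀) + c ≤ _
    rw [← Finset.add_sum_erase Finset.univ _ (Finset.mem_univ i₀)]
    gcongr
    calc c ≤ ∑ i ∈ Finset.univ.erase i₀, -(1 / Real.log 2) := by
            rw [Finset.sum_const, nsmul_eq_mul, mul_comm]
            have : ((Finset.univ.erase i₀).card : ℝ) ≤ Fintype.card ι := by
              exact_mod_cast Finset.card_le_card (Finset.subset_univ _)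
            have hneg : -(1 / Real.log 2) ≤ 0 := neg_nonpos.2 (by positivity)
            simp only [c]
            nlinarith
      _ ≤ _ := Finset.sum_le_sum fun i _ =>
            term_lb _ _ (hp j i).1 (hp j i).2 (hK i)
  have hconst : Tendsto (fun _ : ℕ => c) atTop (nhds c) := tendsto_const_nhds
  exact tendsto_atTop_mono hge (hterm.atTop_add hconst)
end

section
/- Let ι be a finite type and K : ι → ℝ with K i ≥ 0 for all i. Let (p_j)_{j∈ℕ} be a sequence of functions ι → ℝ with 0 < p_j i ≤ 1 for all i, j, converging (pointwise) to q : ι → ℝ with 0 ≤ q i ≤ 1 for all i, and suppose that for every i with q i = 0 one has K i = 0. Then g(p_j) = ∑_{i∈ι} (p_j i − K i)·log₂(p_j i) converges to ∑_{i : q i > 0} (q i − K i)·log₂(q i). -/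
open Filter

theorem stmt4 {ι : Type*} [Fintype ι] (K : ι → ℝ) (hK : ∀ i, 0 ≤ K i)
    (p : ℕ → ι → ℝ) (hp : ∀ j i, 0 < p j i ∧ p j i ≤ 1)
    (q : ι → ℝ) (hconv : ∀ i, Tendsto (fun j => p j i) atTop (nhds (q i)))
    (hq : ∀ i, 0 ≤ q i ∧ q i ≤ 1) (hqK : ∀ i, q i = 0 → K i = 0) :
    Tendsto (fun j => ∑ i, (p j i - K i) * Real.logb 2 (p j i)) atTop
      (nhds (∑ i ∈ Finset.univ.filter (fun i => 0 < q i), (q i - K i) * Real.logb 2 (q i))) := by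
  have hsum : (∑ i ∈ Finset.univ.filter (fun i => 0 < q i), (q i - K i) * Real.logb 2 (q i))
      = ∑ i, (q i - K i) * Real.logb 2 (q i) := by
    rw [Finset.sum_filter_of_ne]
    intro i _ hne
    rcases lt_or_eq_of_le (hq i).1 with h | h
    · exact h
    · exfalso; apply hne
      rw [← h, hqK i h.symm]
      simp
  rw [hsum]
  apply tendsto_finset_sum
  intro i _
  rcases lt_or_eq_of_le (hq i).1 with h | h
  · have hcont : ContinuousAt (fun x : ℝ => (x - K i) * Real.logb 2 x) (q i) := by
      apply ContinuousAt.mul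
      · fun_prop
      · exact Real.continuousAt_logb (ne_of_gt h)
    exact hcont.tendsto.comp (hconv i)
  · -- q i = 0, so K i = 0
    have hK0 : K i = 0 := hqK i h.symm
    have : (fun j => (p j i - K i) * Real.logb 2 (p j i))
        = fun j => (p j i * Real.log (p j i)) / Real.log 2 := by
      funext j; rw [hK0, Real.logb]; ring
    rw [this]
    have hgoal : (q i - K i) * Real.logb 2 (q i) = (q i * Real.log (q i)) / Real.log 2 := by
      rw [hK0, Real.logb]; ring
    rw [hgoal]
    exact ((Real.continuous_mul_log.tendsto (q i)).comp (hconv i)).div_const _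
end

section
/- Let n ≥ 1 and let E = (e₁,…,e_m) be a finite sequence of elements of Fin n × Fin n. Let CM_n ⊆ M_n be the set of edge probability distributions Q of the form Q[u,v] = p[u]·q[v] for probability vectors p, q on Fin n. Define f_E(Q) = ∑_{u,v} (Q[u,v] − K_{u,v})·log₂ Q[u,v], where K_{u,v} is the number of indices i with e_i = (u,v), with the conventions 0·log₂ 0 = 0 and f_E(Q) = +∞ if Q[u,v] = 0 for some (u,v) with K_{u,v} > 0. Then f_E has a unique minimizer over CM_n: there is exactly one Q* ∈ CM_n such that f_E(Q*) < f_E(Q) for all Q ∈ CM_n with Q ≠ Q*. -/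
/-- `p` is a probability vector on `Fin n`. -/
def IsProbVec {n : ℕ} (p : Fin n → ℝ) : Prop :=
  (∀ u, 0 ≤ p u) ∧ ∑ u, p u = 1

/-- The set `CM_n` of configuration-model edge distributions `Q[u,v] = p[u]·q[v]`. -/
def CMset (n : ℕ) : Set (Fin n × Fin n → ℝ) :=
  {Q | IsEdgeDist Q ∧ ∃ p q : Fin n → ℝ, IsProbVec p ∧ IsProbVec q ∧
    ∀ a : Fin n × Fin n, Q a = p a.1 * q a.2}

open Real Finset

lemma logtwo_pos : (0:ℝ) < Real.log 2 := Real.log_pos one_lt_two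

lemma mul_logb_ge {x : ℝ} (h0 : 0 ≤ x) (h1 : x ≤ 1) : -2 ≤ x * Real.logb 2 x := by
  rcases eq_or_lt_of_le h0 with h | h
  · simp [← h]
  · have h2 : Real.log x⁻¹ ≤ x⁻¹ - 1 := Real.log_le_sub_one_of_pos (by positivity)
    rw [Real.log_inv] at h2
    have h3 := mul_le_mul_of_nonneg_left h2 h.le
    have hx : x * x⁻¹ = 1 := mul_inv_cancel₀ h.ne'
    have hlog : x - 1 ≤ x * Real.log x := by nlinarith
    have hl2 : (0.6931471803 : ℝ) < Real.log 2 := Real.log_two_gt_d9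
    have e : x * Real.logb 2 x = (x * Real.log x) / Real.log 2 := by
      rw [Real.logb]; ring
    rw [e, le_div_iff₀ logtwo_pos]
    nlinarith

lemma logb_nonpos' {x : ℝ} (h0 : 0 ≤ x) (h1 : x ≤ 1) : Real.logb 2 x ≤ 0 :=
  Real.logb_nonpos one_lt_two h0 h1

lemma mulLogb_mid_lt {a b : ℝ} (ha : 0 ≤ a) (hb : 0 ≤ b) (hab : a ≠ b) :
    ((a + b)/2) * Real.logb 2 ((a + b)/2)
      < (a * Real.logb 2 a + b * Real.logb 2 b)/2 := by
  have h := Real.strictConcaveOn_negMulLog.2 (Set.mem_Ici.2 ha) (Set.mem_Ici.2 hb) hab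
      (by norm_num : (0:ℝ) < 1/2) (by norm_num : (0:ℝ) < 1/2) (by norm_num)
  simp only [Real.negMulLog, smul_eq_mul] at h
  have e : (1/2 : ℝ) * a + 1/2 * b = (a + b)/2 := by ring
  rw [e] at h
  have goal' : ((a+b)/2) * Real.log ((a+b)/2) < (a * Real.log a + b * Real.log b)/2 := by
    nlinarith
  have h5 := mul_lt_mul_of_pos_right goal' (inv_pos.2 logtwo_pos)
  simp only [Real.logb]
  calc ((a+b)/2) * ((Real.log ((a+b)/2))/Real.log 2)
      = ((a+b)/2 * Real.log ((a+b)/2)) * (Real.log 2)⁻¹ := by ring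
    _ < ((a * Real.log a + b * Real.log b)/2) * (Real.log 2)⁻¹ := h5
    _ = (a * (Real.log a/Real.log 2) + b * (Real.log b/Real.log 2))/2 := by ring

lemma mulLogb_mid_le {a b : ℝ} (ha : 0 ≤ a) (hb : 0 ≤ b) :
    ((a + b)/2) * Real.logb 2 ((a + b)/2)
      ≤ (a * Real.logb 2 a + b * Real.logb 2 b)/2 := by
  rcases eq_or_ne a b with rfl | hab
  · have e : (a + a)/2 = a := by ring
    rw [e]; linarith
  · exact (mulLogb_mid_lt ha hb hab).le

lemma logb_mid_ge {a b : ℝ} (ha : 0 < a) (hb : 0 < b) :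
    (Real.logb 2 a + Real.logb 2 b)/2 ≤ Real.logb 2 ((a + b)/2) := by
  have h := (strictConcaveOn_log_Ioi.concaveOn).2 (Set.mem_Ioi.2 ha) (Set.mem_Ioi.2 hb)
      (by norm_num : (0:ℝ) ≤ 1/2) (by norm_num : (0:ℝ) ≤ 1/2) (by norm_num)
  simp only [smul_eq_mul] at h
  have e : (1/2 : ℝ) * a + 1/2 * b = (a + b)/2 := by ring
  rw [e] at h
  have h5 := mul_le_mul_of_nonneg_right h (inv_pos.2 logtwo_pos).le
  simp only [Real.logb]
  calc (Real.log a/Real.log 2 + Real.log b/Real.log 2)/2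
      = (1/2 * Real.log a + 1/2 * Real.log b) * (Real.log 2)⁻¹ := by ring
    _ ≤ (Real.log ((a+b)/2)) * (Real.log 2)⁻¹ := h5
    _ = Real.log ((a+b)/2) / Real.log 2 := by ring

noncomputable def psiF {n : ℕ} (d : Fin n → ℕ) (p : Fin n → ℝ) : ℝ :=
  ∑ u, (p u - (d u : ℝ)) * Real.logb 2 (p u)

noncomputable def phiF {n : ℕ} (d : Fin n → ℕ) (p : Fin n → ℝ) : EReal :=
  if ∃ u, p u = 0 ∧ 0 < d u then ⊤ else ((psiF d p : ℝ) : EReal)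

lemma coord_mid_le (da : ℕ) {a b : ℝ} (ha : 0 ≤ a) (hb : 0 ≤ b)
    (hpos : 0 < da → (0 < a ∧ 0 < b)) :
    ((a + b)/2 - da) * Real.logb 2 ((a + b)/2)
      ≤ ((a - da) * Real.logb 2 a + (b - da) * Real.logb 2 b)/2 := by
  have hA := mulLogb_mid_le ha hb
  have hB : (da : ℝ) * ((Real.logb 2 a + Real.logb 2 b)/2)
      ≤ (da : ℝ) * Real.logb 2 ((a + b)/2) := by
    rcases Nat.eq_zero_or_pos da with h | h
    · simp [h]
    · exact mul_le_mul_of_nonneg_left (logb_mid_ge (hpos h).1 (hpos h).2) (Nat.cast_nonneg da)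
  nlinarith [hA, hB]

lemma coord_mid_lt (da : ℕ) {a b : ℝ} (ha : 0 ≤ a) (hb : 0 ≤ b)
    (hpos : 0 < da → (0 < a ∧ 0 < b)) (hab : a ≠ b) :
    ((a + b)/2 - da) * Real.logb 2 ((a + b)/2)
      < ((a - da) * Real.logb 2 a + (b - da) * Real.logb 2 b)/2 := by
  have hA := mulLogb_mid_lt ha hb hab
  have hB : (da : ℝ) * ((Real.logb 2 a + Real.logb 2 b)/2)
      ≤ (da : ℝ) * Real.logb 2 ((a + b)/2) := by
    rcases Nat.eq_zero_or_pos da with h | h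
    · simp [h]
    · exact mul_le_mul_of_nonneg_left (logb_mid_ge (hpos h).1 (hpos h).2) (Nat.cast_nonneg da)
  nlinarith [hA, hB]

def IsProbVec' {n : ℕ} (p : Fin n → ℝ) : Prop :=
  (∀ u, 0 ≤ p u) ∧ ∑ u, p u = 1

lemma psi_mid_lt {n : ℕ} (d : Fin n → ℕ) {p p' : Fin n → ℝ}
    (hp : ∀ u, 0 ≤ p u) (hp' : ∀ u, 0 ≤ p' u)
    (hpos : ∀ u, 0 < d u → 0 < p u) (hpos' : ∀ u, 0 < d u → 0 < p' u)
    (hne : p ≠ p') :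
    psiF d (fun u => (p u + p' u)/2) < (psiF d p + psiF d p')/2 := by
  obtain ⟨u₀, hu₀⟩ := Function.ne_iff.1 hne
  unfold psiF
  dsimp only
  rw [← Finset.sum_add_distrib, Finset.sum_div]
  refine Finset.sum_lt_sum (fun u _ => ?_) ⟨u₀, Finset.mem_univ _, ?_⟩
  · exact coord_mid_le (d u) (hp u) (hp' u) (fun h => ⟨hpos u h, hpos' u h⟩)
  · exact coord_mid_lt (d u₀) (hp u₀) (hp' u₀) (fun h => ⟨hpos u₀ h, hpos' u₀ h⟩) hu₀

lemma psi_term_ge {x : ℝ} (da : ℕ) (h0 : 0 ≤ x) (h1 : x ≤ 1) :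
    -2 ≤ (x - (da : ℝ)) * Real.logb 2 x := by
  have hA := mul_logb_ge h0 h1
  have hB : (da : ℝ) * Real.logb 2 x ≤ 0 :=
    mul_nonpos_of_nonneg_of_nonpos (Nat.cast_nonneg da) (logb_nonpos' h0 h1)
  nlinarith

lemma probVec_le_one {n : ℕ} {p : Fin n → ℝ} (hp : IsProbVec' p) (u : Fin n) : p u ≤ 1 := by
  have := Finset.single_le_sum (f := p) (fun i _ => hp.1 i) (Finset.mem_univ u)
  rw [hp.2] at this; exact this

lemma phi_min {n : ℕ} (hn : 1 ≤ n) (d : Fin n → ℕ) :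
    ∃ ps : Fin n → ℝ, IsProbVec' ps ∧ (¬ ∃ u, ps u = 0 ∧ 0 < d u) ∧
      ∀ p, IsProbVec' p → p ≠ ps → phiF d ps < phiF d p := by
  have hnR : (0:ℝ) < n := by exact_mod_cast hn
  set p0 : Fin n → ℝ := fun _ => 1/n with hp0def
  have hp0 : IsProbVec' p0 := by
    refine ⟨fun u => by positivity, ?_⟩
    simp only [hp0def, Finset.sum_const, Finset.card_univ, Fintype.card_fin, nsmul_eq_mul]
    field_simp
  set δ : ℝ := min (1/n) ((2:ℝ) ^ (-(psiF d p0 + 2*n + 3)) : ℝ) with hδdef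
  have hδ0 : 0 < δ := lt_min (by positivity) (Real.rpow_pos_of_pos two_pos _)
  have hδn : δ ≤ 1/n := min_le_left _ _
  have hδlog : Real.logb 2 δ ≤ -(psiF d p0 + 2*n + 3) := by
    have h1 : Real.logb 2 δ ≤ Real.logb 2 ((2:ℝ) ^ (-(psiF d p0 + 2*n + 3))) :=
      Real.logb_le_logb_of_le one_lt_two hδ0 (min_le_right _ _)
    rwa [Real.logb_rpow (by norm_num) (by norm_num)] at h1
  set K : Set (Fin n → ℝ) := {p | IsProbVec' p ∧ ∀ u, 0 < d u → δ ≤ p u} with hKdef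
  have hclosed : IsClosed {p : Fin n → ℝ | ∀ u, 0 < d u → δ ≤ p u} := by
    have e : {p : Fin n → ℝ | ∀ u, 0 < d u → δ ≤ p u}
        = ⋂ u, {p : Fin n → ℝ | 0 < d u → δ ≤ p u} := by
      ext p; simp [Set.mem_iInter]
    rw [e]
    refine isClosed_iInter fun u => ?_
    by_cases h : 0 < d u
    · simp only [h, true_implies]
      exact isClosed_le continuous_const (continuous_apply u)
    · simp only [h, false_implies]
      exact isClosed_univ
  have hKcpt : IsCompact K := by
    have e : K = stdSimplex ℝ (Fin n) ∩ {p | ∀ u, 0 < d u → δ ≤ p u} := rfl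
    rw [e]
    exact (isCompact_stdSimplex ℝ (Fin n)).inter_right hclosed
  have hcont : ContinuousOn (psiF d) K := by
    unfold psiF
    refine continuousOn_finset_sum _ fun u _ => ?_
    have e : (fun p : Fin n → ℝ => (p u - (d u : ℝ)) * Real.logb 2 (p u)) =
        fun p => p u * Real.logb 2 (p u) - (d u : ℝ) * Real.logb 2 (p u) := by
      funext p; ring
    rw [e]
    have c1 : Continuous fun x : ℝ => x * Real.logb 2 x := by
      have e2 : (fun x : ℝ => x * Real.logb 2 x) = fun x => (-Real.negMulLog x) / Real.log 2 := by
        funext x; simp only [Real.negMulLog, Real.logb]; ring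
      rw [e2]
      exact Real.continuous_negMulLog.neg.div_const _
    refine ((c1.comp (continuous_apply u)).continuousOn).sub ?_
    by_cases hdu : 0 < d u
    · have c2 : ContinuousOn (fun p : Fin n → ℝ => Real.log (p u)) K := by
        refine Real.continuousOn_log.comp (continuous_apply u).continuousOn fun p hp => ?_
        exact fun h => absurd h (ne_of_gt (lt_of_lt_of_le hδ0 (hp.2 u hdu)))
      have e3 : (fun p : Fin n → ℝ => (d u : ℝ) * Real.logb 2 (p u)) =
          fun p => (d u : ℝ) * (Real.log (p u) / Real.log 2) := rfl
      rw [e3]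
      exact continuousOn_const.mul (c2.div_const _)
    · have : d u = 0 := Nat.eq_zero_of_not_pos hdu
      simp only [this, Nat.cast_zero, zero_mul]
      exact continuousOn_const
  have hp0K : p0 ∈ K := ⟨hp0, fun u _ => le_trans hδn (le_refl _)⟩
  obtain ⟨ps, hpsK, hmin⟩ := hKcpt.exists_isMinOn ⟨p0, hp0K⟩ hcont
  have hminle : ∀ p ∈ K, psiF d ps ≤ psiF d p := fun p hp => hmin hp
  have hpspos : ∀ u, 0 < d u → 0 < ps u := fun u hu => lt_of_lt_of_le hδ0 (hpsK.2 u hu)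
  have hnotbad : ¬ ∃ u, ps u = 0 ∧ 0 < d u := by
    rintro ⟨u, h0, hd⟩; exact absurd h0 (hpspos u hd).ne'
  have hphips : phiF d ps = ((psiF d ps : ℝ) : EReal) := if_neg hnotbad
  refine ⟨ps, hpsK.1, hnotbad, fun p hpv hne => ?_⟩
  by_cases hbad : ∃ u, p u = 0 ∧ 0 < d u
  · rw [hphips]
    unfold phiF
    rw [if_pos hbad]
    exact EReal.coe_lt_top _
  · rw [hphips, show phiF d p = ((psiF d p : ℝ) : EReal) from if_neg hbad, EReal.coe_lt_coe_iff]
    have hppos : ∀ u, 0 < d u → 0 < p u := fun u hu =>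
      (hpv.1 u).lt_of_ne (fun h => hbad ⟨u, h.symm, hu⟩)
    by_cases hpK : p ∈ K
    · rcases lt_or_eq_of_le (hminle p hpK) with h | h
      · exact h
      · exfalso
        set q : Fin n → ℝ := fun u => (p u + ps u)/2 with hqdef
        have hqK : q ∈ K := by
          refine ⟨⟨fun u => by have := hpv.1 u; have := hpsK.1.1 u; positivity, ?_⟩,
            fun u hu => ?_⟩
          · simp only [hqdef]
            rw [← Finset.sum_div, Finset.sum_add_distrib, hpv.2, hpsK.1.2]
            norm_num
          · have h1 := hpK.2 u hu
            have h2 := hpsK.2 u hu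
            simp only [hqdef]
            linarith
        have hlt := psi_mid_lt d hpv.1 hpsK.1.1 hppos hpspos hne
        have hq := hminle q hqK
        rw [← h] at hlt
        simp only [hqdef] at hlt hq
        linarith
    · have hex : ∃ u, 0 < d u ∧ p u < δ := by
        by_contra hc
        push_neg at hc
        exact hpK ⟨hpv, fun u hu => hc u hu⟩
      obtain ⟨u₀, hd0, hlt0⟩ := hex
      have hple1 : ∀ u, p u ≤ 1 := probVec_le_one hpv
      have hterm : ∀ u, -2 ≤ (p u - (d u : ℝ)) * Real.logb 2 (p u) :=
        fun u => psi_term_ge (d u) (hpv.1 u) (hple1 u)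
      have hu0 : -2 - Real.logb 2 δ ≤ (p u₀ - (d u₀ : ℝ)) * Real.logb 2 (p u₀) := by
        have hpu0 : 0 < p u₀ := hppos u₀ hd0
        have hL1 : Real.logb 2 (p u₀) ≤ Real.logb 2 δ :=
          Real.logb_le_logb_of_le one_lt_two hpu0 hlt0.le
        have hL0 : Real.logb 2 (p u₀) ≤ 0 := logb_nonpos' (hpv.1 u₀) (hple1 u₀)
        have hd1 : (1:ℝ) ≤ (d u₀ : ℝ) := by exact_mod_cast hd0
        have hA := mul_logb_ge (hpv.1 u₀) (hple1 u₀)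
        nlinarith [mul_nonneg (sub_nonneg.2 hd1) (neg_nonneg.2 hL0)]
      have hrest : -2 * n ≤ ∑ u ∈ Finset.univ.erase u₀,
          (p u - (d u : ℝ)) * Real.logb 2 (p u) := by
        have := Finset.card_nsmul_le_sum (Finset.univ.erase u₀)
          (fun u => (p u - (d u : ℝ)) * Real.logb 2 (p u)) (-2)
          (fun u _ => hterm u)
        have hcard : ((Finset.univ.erase u₀).card : ℝ) ≤ n := by
          have h1 : (Finset.univ.erase u₀).card ≤ n := by
            calc (Finset.univ.erase u₀).card ≤ Finset.univ.card := Finset.card_erase_le ..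
              _ = n := by simp
          exact_mod_cast h1
        rw [nsmul_eq_mul] at this
        nlinarith
      have hsum : psiF d p = (p u₀ - (d u₀ : ℝ)) * Real.logb 2 (p u₀) +
          ∑ u ∈ Finset.univ.erase u₀, (p u - (d u : ℝ)) * Real.logb 2 (p u) := by
        unfold psiF
        exact (Finset.add_sum_erase _ _ (Finset.mem_univ u₀)).symm
      have hps_le : psiF d ps ≤ psiF d p0 := hminle p0 hp0K
      have : psiF d p0 + 1 ≤ psiF d p := by
        rw [hsum]
        nlinarith [hδlog]
      linarith

lemma ipv {n : ℕ} {p : Fin n → ℝ} (h : IsProbVec p) : IsProbVec' p := h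

def dOut {n m : ℕ} (E : Fin m → Fin n × Fin n) (u : Fin n) : ℕ := ∑ v, edgeCount E (u, v)

def dIn {n m : ℕ} (E : Fin m → Fin n × Fin n) (v : Fin n) : ℕ := ∑ u, edgeCount E (u, v)

lemma phiF_ne_bot {n : ℕ} (d : Fin n → ℕ) (p : Fin n → ℝ) : phiF d p ≠ ⊥ := by
  unfold phiF; split_ifs <;> simp

lemma fE_prod {n m : ℕ} (E : Fin m → Fin n × Fin n) {p q : Fin n → ℝ}
    (hp : IsProbVec' p) (hq : IsProbVec' q) :
    fE E (fun a => p a.1 * q a.2) = phiF (dOut E) p + phiF (dIn E) q := by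
  have hbadiff : (∃ a : Fin n × Fin n, p a.1 * q a.2 = 0 ∧ 0 < edgeCount E a) ↔
      ((∃ u, p u = 0 ∧ 0 < dOut E u) ∨ (∃ v, q v = 0 ∧ 0 < dIn E v)) := by
    constructor
    · rintro ⟨a, h0, hK⟩
      rcases mul_eq_zero.1 h0 with h | h
      · refine Or.inl ⟨a.1, h, lt_of_lt_of_le hK ?_⟩
        have := Finset.single_le_sum (f := fun v => edgeCount E (a.1, v))
          (fun i _ => Nat.zero_le _) (Finset.mem_univ a.2)
        simpa [dOut] using this
      · refine Or.inr ⟨a.2, h, lt_of_lt_of_le hK ?_⟩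
        have := Finset.single_le_sum (f := fun u => edgeCount E (u, a.2))
          (fun i _ => Nat.zero_le _) (Finset.mem_univ a.1)
        simpa [dIn] using this
    · rintro (⟨u, h0, hd⟩ | ⟨v, h0, hd⟩)
      · obtain ⟨v, hv⟩ : ∃ v, 0 < edgeCount E (u, v) := by
          by_contra hc
          push_neg at hc
          have : dOut E u = 0 := Finset.sum_eq_zero fun v _ => Nat.le_zero.1 (hc v)
          omega
        exact ⟨(u, v), by simp [h0], hv⟩
      · obtain ⟨u, hu⟩ : ∃ u, 0 < edgeCount E (u, v) := by
          by_contra hc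
          push_neg at hc
          have : dIn E v = 0 := Finset.sum_eq_zero fun u _ => Nat.le_zero.1 (hc u)
          omega
        exact ⟨(u, v), by simp [h0], hu⟩
  by_cases hbp : ∃ u, p u = 0 ∧ 0 < dOut E u
  · rw [show phiF (dOut E) p = ⊤ from if_pos hbp,
      EReal.top_add_of_ne_bot (phiF_ne_bot _ _)]
    exact if_pos (hbadiff.2 (Or.inl hbp))
  · by_cases hbq : ∃ v, q v = 0 ∧ 0 < dIn E v
    · rw [show phiF (dIn E) q = ⊤ from if_pos hbq,
        EReal.add_top_of_ne_bot (phiF_ne_bot _ _)]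
      exact if_pos (hbadiff.2 (Or.inr hbq))
    · have hnotbad : ¬ ∃ a : Fin n × Fin n, p a.1 * q a.2 = 0 ∧ 0 < edgeCount E a := by
        rw [hbadiff]
        rintro (h | h)
        exacts [hbp h, hbq h]
      rw [show phiF (dOut E) p = ((psiF (dOut E) p : ℝ) : EReal) from if_neg hbp,
        show phiF (dIn E) q = ((psiF (dIn E) q : ℝ) : EReal) from if_neg hbq,
        ← EReal.coe_add]
      unfold fE
      rw [if_neg hnotbad, EReal.coe_eq_coe_iff]
      have hK0 : ∀ a : Fin n × Fin n, p a.1 * q a.2 = 0 → edgeCount E a = 0 := by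
        intro a h0
        by_contra h
        exact hnotbad ⟨a, h0, Nat.pos_of_ne_zero h⟩
      have hpt : ∀ a : Fin n × Fin n,
          (p a.1 * q a.2 - (edgeCount E a : ℝ)) * Real.logb 2 (p a.1 * q a.2)
          = (p a.1 * q a.2 - (edgeCount E a : ℝ)) * Real.logb 2 (p a.1)
            + (p a.1 * q a.2 - (edgeCount E a : ℝ)) * Real.logb 2 (q a.2) := by
        intro a
        by_cases h1 : p a.1 = 0
        · have hK := hK0 a (by simp [h1])
          simp [h1, hK]
        · by_cases h2 : q a.2 = 0
          · have hK := hK0 a (by simp [h2])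
            simp [h2, hK]
          · rw [Real.logb_mul h1 h2]; ring
      calc ∑ a : Fin n × Fin n,
            ((fun a : Fin n × Fin n => p a.1 * q a.2) a - (edgeCount E a : ℝ)) *
              Real.logb 2 ((fun a : Fin n × Fin n => p a.1 * q a.2) a)
          = ∑ a : Fin n × Fin n,
            ((p a.1 * q a.2 - (edgeCount E a : ℝ)) * Real.logb 2 (p a.1)
              + (p a.1 * q a.2 - (edgeCount E a : ℝ)) * Real.logb 2 (q a.2)) := by
            exact Finset.sum_congr rfl fun a _ => hpt a
        _ = (∑ a : Fin n × Fin n, (p a.1 * q a.2 - (edgeCount E a : ℝ)) * Real.logb 2 (p a.1))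
            + ∑ a : Fin n × Fin n, (p a.1 * q a.2 - (edgeCount E a : ℝ)) * Real.logb 2 (q a.2) :=
            Finset.sum_add_distrib
        _ = psiF (dOut E) p + psiF (dIn E) q := by
            congr 1
            · rw [Fintype.sum_prod_type]
              refine Finset.sum_congr rfl fun u _ => ?_
              dsimp only
              rw [← Finset.sum_mul]
              congr 1
              rw [Finset.sum_sub_distrib, ← Finset.mul_sum, hq.2, mul_one]
              congr 1
              simp [dOut]
            · rw [Fintype.sum_prod_type_right]
              refine Finset.sum_congr rfl fun v _ => ?_
              dsimp only
              rw [← Finset.sum_mul]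
              congr 1
              rw [Finset.sum_sub_distrib, ← Finset.sum_mul, hp.2, one_mul]
              congr 1
              simp [dIn]

theorem stmt6 {n : ℕ} (hn : 1 ≤ n) (m : ℕ) (E : Fin m → Fin n × Fin n) :
    ∃! Qs : Fin n × Fin n → ℝ,
      Qs ∈ CMset n ∧ ∀ Q ∈ CMset n, Q ≠ Qs → fE E Qs < fE E Q := by
  obtain ⟨ps, hps, hpsgood, hpsmin⟩ := phi_min hn (dOut E)
  obtain ⟨qs, hqs, hqsgood, hqsmin⟩ := phi_min hn (dIn E)
  set Qs : Fin n × Fin n → ℝ := fun a => ps a.1 * qs a.2 with hQsdef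
  have hpsle : ∀ p, IsProbVec' p → phiF (dOut E) ps ≤ phiF (dOut E) p := by
    intro p hp
    rcases eq_or_ne p ps with rfl | h
    · exact le_refl _
    · exact (hpsmin p hp h).le
  have hqsle : ∀ p, IsProbVec' p → phiF (dIn E) qs ≤ phiF (dIn E) p := by
    intro p hp
    rcases eq_or_ne p qs with rfl | h
    · exact le_refl _
    · exact (hqsmin p hp h).le
  have hps_ne_top : phiF (dOut E) ps ≠ ⊤ := by
    rw [show phiF (dOut E) ps = ((psiF (dOut E) ps : ℝ) : EReal) from if_neg hpsgood]
    exact EReal.coe_ne_top _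
  have hqs_ne_top : phiF (dIn E) qs ≠ ⊤ := by
    rw [show phiF (dIn E) qs = ((psiF (dIn E) qs : ℝ) : EReal) from if_neg hqsgood]
    exact EReal.coe_ne_top _
  have hQsmem : Qs ∈ CMset n := by
    refine ⟨⟨fun a => ⟨mul_nonneg (hps.1 _) (hqs.1 _), ?_⟩, ?_⟩, ps, qs, hps, hqs, fun a => rfl⟩
    · calc ps a.1 * qs a.2 ≤ 1 * 1 :=
        mul_le_mul (probVec_le_one hps a.1) (probVec_le_one hqs a.2) (hqs.1 a.2) zero_le_one
        _ = 1 := one_mul 1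
    · rw [Fintype.sum_prod_type]
      have : ∀ u, ∑ v, ps u * qs v = ps u := by
        intro u; rw [← Finset.mul_sum, hqs.2, mul_one]
      rw [Finset.sum_congr rfl fun u _ => this u]
      exact hps.2
  have hstrict : ∀ Q ∈ CMset n, Q ≠ Qs → fE E Qs < fE E Q := by
    intro Q hQ hne
    obtain ⟨hQd, p, q, hp, hq, hQeq⟩ := hQ
    have hQfun : Q = fun a => p a.1 * q a.2 := funext hQeq
    rw [hQfun, fE_prod E (ipv hp) (ipv hq), show fE E Qs = _ from fE_prod E (ipv hps) (ipv hqs)]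
    have hor : p ≠ ps ∨ q ≠ qs := by
      by_contra hc
      push_neg at hc
      exact hne (hQfun.trans (by rw [hc.1, hc.2]))
    rcases hor with h | h
    · exact EReal.add_lt_add_of_lt_of_le' (hpsmin p (ipv hp) h) (hqsle q (ipv hq))
        (phiF_ne_bot _ _) (fun _ h2 => absurd h2 hqs_ne_top)
    · rw [add_comm (phiF (dOut E) ps) _, add_comm (phiF (dOut E) p) _]
      exact EReal.add_lt_add_of_lt_of_le' (hqsmin q (ipv hq) h) (hpsle p (ipv hp))
        (phiF_ne_bot _ _) (fun _ h2 => absurd h2 hps_ne_top)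
  refine ⟨Qs, ⟨hQsmem, hstrict⟩, ?_⟩
  rintro Q' ⟨hQ'mem, hQ'min⟩
  by_contra hne'
  exact absurd ((hQ'min Qs hQsmem (fun h => hne' h.symm)).trans (hstrict Q' hQ'mem hne'))
    (lt_irrefl _)
end
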